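/- arXiv:1704.03992 — 2 statements merged into one kernel-verified Lean document; each statement's English description precedes it below -/
import Mathlib

section
/- Let G be a connected k-regular simple graph on N vertices with averaging matrix A, and let σ₂ ≥ 0 satisfy ‖Ax‖₂ ≤ σ₂‖x‖₂ for every x ∈ ℝ^N with ∑_i x_i = 0. Then for every β ∈ ℝ^N, (1 − σ₂²)·((k+1)/N)·‖β − Π_B(β)‖² ≤ max_{1 ≤ i ≤ N} ‖β − Π_{B_i}(β)‖². In other words, the linear regularity constant η of the family B_1, …, B_N is at least (1 − σ₂²)(k+1)/N. -/
noncomputable section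

/-- The local consensus subspace `B_i = {β : β_i = β_k for all neighbors k of i}`. -/
def localConsensus {N : ℕ} (G : SimpleGraph (Fin N)) (i : Fin N) :
    Submodule ℝ (EuclideanSpace ℝ (Fin N)) where
  carrier := {β | ∀ k, G.Adj i k → β i = β k}
  zero_mem' := by intro k _; rfl
  add_mem' := by
    intro a b ha hb k hk
    simp only [Set.mem_setOf_eq] at *
    simp [PiLp.add_apply, ha k hk, hb k hk]
  smul_mem' := by
    intro c a ha k hk
    simp only [Set.mem_setOf_eq] at *
    simp [PiLp.smul_apply, ha k hk]

/-- The averaging matrix of a `k`-regular graph: `A i j = 1/(k+1)` if `j = i` or `j ∈ 𝒩 i`. -/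
def avgMatrix {N : ℕ} (G : SimpleGraph (Fin N)) [DecidableRel G.Adj] (k : ℕ) :
    Matrix (Fin N) (Fin N) ℝ :=
  Matrix.of fun i j => if j = i ∨ G.Adj i j then (1 : ℝ) / (k + 1) else 0

/-!
Write `β = x + c • 𝟙` with `∑ i, x i = 0`. Since constants lie in `B`, the distance from `β` to
`B` is at most `‖x‖`; since `A` fixes `𝟙` and preserves zero-sum vectors,
`‖β‖² - ‖Aβ‖² = ‖x‖² - ‖Ax‖² ≥ (1 - σ₂²) ‖x‖²`. On the other hand `(Aβ) i` is the mean of `β` over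
the closed neighbourhood `N[i]`, on which every vector of `B_i` is constant, so
`‖β - Π_{B_i} β‖²` is at least the local variance `∑_{j ∈ N[i]} (β j - (Aβ) i)²`. By double
counting in the regular graph these variances add up to `(k + 1)(‖β‖² - ‖Aβ‖²)`, and the
maximum over the `N` vertices dominates their average.
-/

open Finset

theorem Finset.sum_sq_sub_eq_of_sum_eq {α : Type*} {s : Finset α} {f : α → ℝ} {a : ℝ}
    (h : ∑ j ∈ s, f j = #s * a) (c : ℝ) :
    ∑ j ∈ s, (f j - c) ^ 2 = ∑ j ∈ s, (f j - a) ^ 2 + #s * (a - c) ^ 2 := by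
  have expand : ∀ b, ∑ j ∈ s, (f j - b) ^ 2 =
      ∑ j ∈ s, f j ^ 2 - 2 * b * ∑ j ∈ s, f j + #s * b ^ 2 := by
    intro b
    simp only [sub_sq, sum_add_distrib, sum_sub_distrib, sum_const, nsmul_eq_mul, ← sum_mul,
      ← mul_sum]
    ring
  rw [expand, expand, h]
  ring

theorem Finset.sum_sq_sub_le_of_sum_eq {α : Type*} {s : Finset α} {f : α → ℝ} {a : ℝ}
    (h : ∑ j ∈ s, f j = #s * a) (c : ℝ) :
    ∑ j ∈ s, (f j - a) ^ 2 ≤ ∑ j ∈ s, (f j - c) ^ 2 := by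
  rw [sum_sq_sub_eq_of_sum_eq h c]
  exact le_add_of_nonneg_right (by positivity)

theorem Fintype.sum_div_card_le_iSup {ι : Type*} [Fintype ι] (f : ι → ℝ) :
    (∑ i, f i) / Fintype.card ι ≤ ⨆ i, f i := by
  cases isEmpty_or_nonempty ι
  · simp
  rw [div_le_iff₀ (by exact_mod_cast Fintype.card_pos), mul_comm, ← nsmul_eq_mul]
  exact sum_le_card_nsmul _ _ _ fun i _ => le_ciSup (Set.finite_range f).bddAbove i

theorem Submodule.norm_sub_starProjection_le {E : Type*} [NormedAddCommGroup E]
    [InnerProductSpace ℝ E] {K : Submodule ℝ E} [K.HasOrthogonalProjection] (y : E) {v : E}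
    (hv : v ∈ K) : ‖y - K.starProjection y‖ ≤ ‖y - v‖ := by
  rw [starProjection_minimal]
  exact ciInf_le ⟨0, Set.forall_mem_range.mpr fun _ => norm_nonneg _⟩ (⟨v, hv⟩ : K)

theorem EuclideanSpace.norm_add_const_sq {ι : Type*} [Fintype ι] {y : EuclideanSpace ℝ ι}
    (hy : ∑ i, y i = 0) (c : ℝ) :
    ‖y + WithLp.toLp 2 (fun _ => c)‖ ^ 2 = ‖y‖ ^ 2 + Fintype.card ι * c ^ 2 := by
  simp only [EuclideanSpace.real_norm_sq_eq, PiLp.add_apply, add_sq, sum_add_distrib,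
    ← sum_mul, ← mul_sum, hy, sum_const, card_univ, nsmul_eq_mul]
  simp

theorem EuclideanSpace.exists_sum_eq_zero_add_const {ι : Type*} [Fintype ι]
    (β : EuclideanSpace ℝ ι) :
    ∃ (x : EuclideanSpace ℝ ι) (c : ℝ), ∑ i, x i = 0 ∧ x + WithLp.toLp 2 (fun _ => c) = β := by
  refine ⟨β - WithLp.toLp 2 (fun _ => (∑ i, β i) / Fintype.card ι), _, ?_, sub_add_cancel _ _⟩
  cases isEmpty_or_nonempty ι
  · simp
  simp only [PiLp.sub_apply, sum_sub_distrib, sum_const, card_univ, nsmul_eq_mul]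
  rw [mul_div_cancel₀ _ (by exact_mod_cast Fintype.card_ne_zero), sub_self]

namespace SimpleGraph

variable {V : Type*} [Fintype V] [DecidableEq V] (G : SimpleGraph V) [DecidableRel G.Adj]

def closedNeighborFinset (v : V) : Finset V := insert v (G.neighborFinset v)

variable {G}

theorem mem_closedNeighborFinset {v w : V} :
    w ∈ G.closedNeighborFinset v ↔ w = v ∨ G.Adj v w := by
  simp [closedNeighborFinset]

theorem mem_closedNeighborFinset_comm {v w : V} :
    w ∈ G.closedNeighborFinset v ↔ v ∈ G.closedNeighborFinset w := by
  simp only [mem_closedNeighborFinset, eq_comm, G.adj_comm]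

theorem IsRegularOfDegree.card_closedNeighborFinset {k : ℕ} (hreg : G.IsRegularOfDegree k)
    (v : V) : #(G.closedNeighborFinset v) = k + 1 := by
  rw [closedNeighborFinset, card_insert_of_notMem (by simp), card_neighborFinset_eq_degree, hreg v]

theorem IsRegularOfDegree.sum_sum_closedNeighborFinset {M : Type*} [AddCommMonoid M] {k : ℕ}
    (hreg : G.IsRegularOfDegree k) (g : V → M) :
    ∑ v, ∑ w ∈ G.closedNeighborFinset v, g w = (k + 1) • ∑ w, g w := by
  rw [sum_comm' (t' := univ) (s' := G.closedNeighborFinset)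
    (fun v w => by simp [mem_closedNeighborFinset_comm]), smul_sum]
  simp only [sum_const, hreg.card_closedNeighborFinset]

end SimpleGraph

theorem const_mem_localConsensus {N : ℕ} (G : SimpleGraph (Fin N)) (i : Fin N) (c : ℝ) :
    WithLp.toLp 2 (fun _ => c) ∈ localConsensus G i :=
  fun _ _ => rfl

section avgMatrix

open SimpleGraph

variable {N k : ℕ} {G : SimpleGraph (Fin N)} [DecidableRel G.Adj]

theorem toEuclideanLin_avgMatrix_apply (β : EuclideanSpace ℝ (Fin N)) (i : Fin N) :
    Matrix.toEuclideanLin (avgMatrix G k) β i =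
      (∑ j ∈ G.closedNeighborFinset i, β j) / (k + 1) := by
  change ∑ j, avgMatrix G k i j * β j = _
  simp only [avgMatrix, Matrix.of_apply, ite_mul, zero_mul, ← mem_closedNeighborFinset,
    sum_ite_mem, univ_inter, sum_div]
  exact sum_congr rfl fun j _ => by ring

theorem sum_closedNeighborFinset_eq_card_mul_avgMatrix (hreg : G.IsRegularOfDegree k)
    (β : EuclideanSpace ℝ (Fin N)) (i : Fin N) :
    ∑ j ∈ G.closedNeighborFinset i, β j =
      #(G.closedNeighborFinset i) * Matrix.toEuclideanLin (avgMatrix G k) β i := by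
  rw [toEuclideanLin_avgMatrix_apply, hreg.card_closedNeighborFinset]
  push_cast
  field_simp

theorem sum_toEuclideanLin_avgMatrix (hreg : G.IsRegularOfDegree k)
    (β : EuclideanSpace ℝ (Fin N)) :
    ∑ i, Matrix.toEuclideanLin (avgMatrix G k) β i = ∑ i, β i := by
  simp only [toEuclideanLin_avgMatrix_apply, ← sum_div, hreg.sum_sum_closedNeighborFinset,
    nsmul_eq_mul]
  push_cast
  field_simp

theorem toEuclideanLin_avgMatrix_const (hreg : G.IsRegularOfDegree k) (c : ℝ) :
    Matrix.toEuclideanLin (avgMatrix G k) (WithLp.toLp 2 (fun _ => c)) =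
      WithLp.toLp 2 (fun _ => c) := by
  ext i
  simp only [toEuclideanLin_avgMatrix_apply, sum_const, hreg.card_closedNeighborFinset,
    nsmul_eq_mul]
  push_cast
  field_simp

theorem sum_sum_sq_sub_avgMatrix (hreg : G.IsRegularOfDegree k)
    (β : EuclideanSpace ℝ (Fin N)) :
    ∑ i, ∑ j ∈ G.closedNeighborFinset i, (β j - Matrix.toEuclideanLin (avgMatrix G k) β i) ^ 2 =
      (k + 1) * (‖β‖ ^ 2 - ‖Matrix.toEuclideanLin (avgMatrix G k) β‖ ^ 2) := by
  have local_sum : ∀ i, ∑ j ∈ G.closedNeighborFinset i,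
      (β j - Matrix.toEuclideanLin (avgMatrix G k) β i) ^ 2 =
        ∑ j ∈ G.closedNeighborFinset i, β j ^ 2 -
          (k + 1) * Matrix.toEuclideanLin (avgMatrix G k) β i ^ 2 := by
    intro i
    have := sum_sq_sub_eq_of_sum_eq (sum_closedNeighborFinset_eq_card_mul_avgMatrix hreg β i) 0
    simp only [sub_zero, hreg.card_closedNeighborFinset] at this
    push_cast at this
    linarith
  simp only [local_sum, sum_sub_distrib, hreg.sum_sum_closedNeighborFinset, nsmul_eq_mul,
    ← mul_sum, EuclideanSpace.real_norm_sq_eq]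
  push_cast
  ring

theorem norm_toEuclideanLin_avgMatrix_le (hreg : G.IsRegularOfDegree k)
    (β : EuclideanSpace ℝ (Fin N)) : ‖Matrix.toEuclideanLin (avgMatrix G k) β‖ ≤ ‖β‖ := by
  have h : 0 ≤ ((k : ℝ) + 1) * (‖β‖ ^ 2 - ‖Matrix.toEuclideanLin (avgMatrix G k) β‖ ^ 2) :=
    sum_sum_sq_sub_avgMatrix hreg β ▸ sum_nonneg fun _ _ => sum_nonneg fun _ _ => sq_nonneg _
  rw [mul_nonneg_iff_of_pos_left (by positivity), sub_nonneg] at h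
  exact le_of_sq_le_sq h (norm_nonneg _)

theorem sum_sq_sub_avgMatrix_le_norm_sub_sq (hreg : G.IsRegularOfDegree k)
    (β : EuclideanSpace ℝ (Fin N)) (i : Fin N)
    {v : EuclideanSpace ℝ (Fin N)} (hv : v ∈ localConsensus G i) :
    ∑ j ∈ G.closedNeighborFinset i, (β j - Matrix.toEuclideanLin (avgMatrix G k) β i) ^ 2 ≤
      ‖β - v‖ ^ 2 := by
  have v_const : ∀ j ∈ G.closedNeighborFinset i, v i = v j := by
    intro j hj
    rcases mem_closedNeighborFinset.1 hj with rfl | hadj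
    exacts [rfl, hv j hadj]
  calc _ ≤ ∑ j ∈ G.closedNeighborFinset i, (β j - v i) ^ 2 :=
        sum_sq_sub_le_of_sum_eq (sum_closedNeighborFinset_eq_card_mul_avgMatrix hreg β i) _
    _ = ∑ j ∈ G.closedNeighborFinset i, (β - v) j ^ 2 :=
        sum_congr rfl fun j hj => by rw [v_const j hj, PiLp.sub_apply]
    _ ≤ ‖β - v‖ ^ 2 := by
        rw [EuclideanSpace.real_norm_sq_eq]
        exact sum_le_sum_of_subset_of_nonneg (subset_univ _) fun _ _ _ => sq_nonneg _

theorem one_sub_sq_mul_norm_sq_le_of_sum_eq_zero (hreg : G.IsRegularOfDegree k) {σ : ℝ}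
    (hσ : ∀ x : EuclideanSpace ℝ (Fin N), (∑ i, x i) = 0 →
      ‖Matrix.toEuclideanLin (avgMatrix G k) x‖ ≤ σ * ‖x‖)
    {x : EuclideanSpace ℝ (Fin N)} (hx : ∑ i, x i = 0) (c : ℝ) :
    (1 - σ ^ 2) * ‖x‖ ^ 2 ≤ ‖x + WithLp.toLp 2 (fun _ => c)‖ ^ 2 -
      ‖Matrix.toEuclideanLin (avgMatrix G k) (x + WithLp.toLp 2 (fun _ => c))‖ ^ 2 := by
  have hAx : ∑ i, Matrix.toEuclideanLin (avgMatrix G k) x i = 0 :=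
    (sum_toEuclideanLin_avgMatrix hreg x).trans hx
  have hAx_le : ‖Matrix.toEuclideanLin (avgMatrix G k) x‖ ^ 2 ≤ σ ^ 2 * ‖x‖ ^ 2 := by
    rw [← mul_pow]
    exact pow_le_pow_left₀ (norm_nonneg _) (hσ x hx) 2
  rw [map_add, toEuclideanLin_avgMatrix_const hreg, EuclideanSpace.norm_add_const_sq hx,
    EuclideanSpace.norm_add_const_sq hAx]
  linarith

end avgMatrix

theorem linear_regularity_lower_bound_general {N k : ℕ} (G : SimpleGraph (Fin N))
    [DecidableRel G.Adj] (hreg : G.IsRegularOfDegree k)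
    (σ₂ : ℝ)
    (hσ : ∀ x : EuclideanSpace ℝ (Fin N), (∑ i, x i) = 0 →
      ‖Matrix.toEuclideanLin (avgMatrix G k) x‖ ≤ σ₂ * ‖x‖)
    (β : EuclideanSpace ℝ (Fin N)) :
    (1 - σ₂ ^ 2) * (((k : ℝ) + 1) / N) *
        ‖β - (Submodule.orthogonalProjection (⨅ i, localConsensus G i) β : EuclideanSpace ℝ (Fin N))‖ ^ 2 ≤
      ⨆ i : Fin N,
        ‖β - (Submodule.orthogonalProjection (localConsensus G i) β : EuclideanSpace ℝ (Fin N))‖ ^ 2 := by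
  set A := Matrix.toEuclideanLin (avgMatrix G k)
  set d := ‖β - (⨅ i, localConsensus G i).starProjection β‖
  set e := fun i => ‖β - (localConsensus G i).starProjection β‖ ^ 2
  obtain ⟨x, c, hx, hβ⟩ := EuclideanSpace.exists_sum_eq_zero_add_const β
  have hd : d ^ 2 ≤ ‖x‖ ^ 2 := by
    refine pow_le_pow_left₀ (norm_nonneg _) ?_ 2
    simpa only [← hβ, add_sub_cancel_right] using Submodule.norm_sub_starProjection_le β
      (Submodule.mem_iInf _ |>.2 fun i => const_mem_localConsensus G i c)
  have hgap : (1 - σ₂ ^ 2) * d ^ 2 ≤ ‖β‖ ^ 2 - ‖A β‖ ^ 2 := by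
    rcases le_total 0 (1 - σ₂ ^ 2) with hσ₂ | hσ₂
    · calc (1 - σ₂ ^ 2) * d ^ 2 ≤ (1 - σ₂ ^ 2) * ‖x‖ ^ 2 := mul_le_mul_of_nonneg_left hd hσ₂
        _ ≤ _ := hβ ▸ one_sub_sq_mul_norm_sq_le_of_sum_eq_zero hreg hσ hx c
    · exact (mul_nonpos_of_nonpos_of_nonneg hσ₂ (sq_nonneg d)).trans <| sub_nonneg.2 <|
        pow_le_pow_left₀ (norm_nonneg _) (norm_toEuclideanLin_avgMatrix_le hreg β) 2
  have hlocal : (k + 1) * (‖β‖ ^ 2 - ‖A β‖ ^ 2) ≤ ∑ i, e i := by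
    rw [← sum_sum_sq_sub_avgMatrix hreg]
    exact sum_le_sum fun i _ => sum_sq_sub_avgMatrix_le_norm_sub_sq hreg β i (Submodule.coe_mem _)
  calc (1 - σ₂ ^ 2) * ((k + 1) / N) * d ^ 2 = (k + 1) * ((1 - σ₂ ^ 2) * d ^ 2) / N := by ring
    _ ≤ (∑ i, e i) / N :=
        div_le_div_of_nonneg_right ((mul_le_mul_of_nonneg_left hgap (by positivity)).trans hlocal)
          (Nat.cast_nonneg N)
    _ ≤ ⨆ i, e i := by simpa only [Fintype.card_fin] using Fintype.sum_div_card_le_iSup e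

/-- For a connected `k`-regular graph with averaging matrix `A` and `σ₂ ≥ 0`
bounding `‖Ax‖₂ ≤ σ₂‖x‖₂` on the zero-sum subspace, the linear regularity constant of the
local consensus subspaces is at least `(1 - σ₂²)(k+1)/N`. -/
theorem linear_regularity_lower_bound {N k : ℕ} (G : SimpleGraph (Fin N))
    [DecidableRel G.Adj] (hconn : G.Connected) (hreg : G.IsRegularOfDegree k)
    (σ₂ : ℝ) (hσ₂ : 0 ≤ σ₂)
    (hσ : ∀ x : EuclideanSpace ℝ (Fin N), (∑ i, x i) = 0 →
      ‖Matrix.toEuclideanLin (avgMatrix G k) x‖ ≤ σ₂ * ‖x‖)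
    (β : EuclideanSpace ℝ (Fin N)) :
    (1 - σ₂ ^ 2) * (((k : ℝ) + 1) / N) *
        ‖β - (Submodule.orthogonalProjection (⨅ i, localConsensus G i) β : EuclideanSpace ℝ (Fin N))‖ ^ 2 ≤
      ⨆ i : Fin N,
        ‖β - (Submodule.orthogonalProjection (localConsensus G i) β : EuclideanSpace ℝ (Fin N))‖ ^ 2 :=
  linear_regularity_lower_bound_general G hreg σ₂ hσ β
end
end

section
/- Let G be a k-regular simple graph on N vertices with averaging matrix A, and let β̄ = (1/N)∑_{i=1}^N β_i. Then for every β ∈ ℝ^N the following law-of-total-variance identity holds: ∑_{i=1}^N (β_i − β̄)² = ∑_{i=1}^N ((Aβ)_i − β̄)² + (1/(k+1)) ∑_{i=1}^N ∑_{l ∈ {i} ∪ 𝒩_i} (β_l − (Aβ)_i)². -/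
noncomputable section

/-- law-of-total-variance identity for a `k`-regular graph with averaging
matrix `A`:
`∑ᵢ (βᵢ − β̄)² = ∑ᵢ ((Aβ)ᵢ − β̄)² + (1/(k+1)) ∑ᵢ ∑_{l ∈ {i} ∪ 𝒩ᵢ} (β_l − (Aβ)ᵢ)²`. -/
theorem law_of_total_variance_avgMatrix {N k : ℕ} (G : SimpleGraph (Fin N))
    [DecidableRel G.Adj] (hreg : G.IsRegularOfDegree k) (β : Fin N → ℝ) :
    ∑ i, (β i - (∑ l, β l) / N) ^ 2 =
      ∑ i, ((avgMatrix G k).mulVec β i - (∑ l, β l) / N) ^ 2 +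
        (1 / ((k : ℝ) + 1)) *
          ∑ i, ∑ l ∈ insert i (G.neighborFinset i), (β l - (avgMatrix G k).mulVec β i) ^ 2 := by
  classical
  set m := (∑ l, β l) / N with hm
  set A := (avgMatrix G k).mulVec β with hAdef
  set S : Fin N → Finset (Fin N) := fun i => insert i (G.neighborFinset i) with hS
  have hmem : ∀ i l, l ∈ S i ↔ i ∈ S l := by
    intro i l
    simp only [hS, Finset.mem_insert, SimpleGraph.mem_neighborFinset]
    constructor
    · rintro (h | h)
      · exact Or.inl h.symm
      · exact Or.inr h.symm
    · rintro (h | h)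
      · exact Or.inl h.symm
      · exact Or.inr h.symm
  have hcard : ∀ i, (S i).card = k + 1 := by
    intro i
    rw [hS]
    simp only
    rw [Finset.card_insert_of_notMem (by simp)]
    rw [← SimpleGraph.degree, hreg i]
  have hA : ∀ i, A i = (∑ l ∈ S i, β l) / ((k : ℝ) + 1) := by
    intro i
    have h1 : A i = ∑ j, (if j = i ∨ G.Adj i j then (1 : ℝ) / (k + 1) else 0) * β j := rfl
    rw [h1]
    have h2 : ∀ j : Fin N, (if j = i ∨ G.Adj i j then (1 : ℝ) / (k + 1) else 0) * β j
        = if j ∈ S i then β j / ((k:ℝ)+1) else 0 := by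
      intro j
      have : j ∈ S i ↔ (j = i ∨ G.Adj i j) := by
        simp [hS, SimpleGraph.mem_neighborFinset]
      simp only [this]
      split_ifs <;> ring
    rw [Finset.sum_congr rfl fun j _ => h2 j]
    rw [Finset.sum_ite_mem, Finset.univ_inter, Finset.sum_div]
  have hdc : ∀ f : Fin N → ℝ, ∑ i, ∑ l ∈ S i, f l = ((k : ℝ) + 1) * ∑ l, f l := by
    intro f
    have h1 : ∀ i, ∑ l ∈ S i, f l = ∑ l, if l ∈ S i then f l else 0 := by
      intro i
      rw [Finset.sum_ite_mem, Finset.univ_inter]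
    rw [Finset.sum_congr rfl fun i _ => h1 i, Finset.sum_comm]
    have h2 : ∀ l : Fin N, (∑ i, if l ∈ S i then f l else 0) = ((k:ℝ)+1) * f l := by
      intro l
      have : (∑ i, if l ∈ S i then f l else 0) = ∑ i, if i ∈ S l then f l else 0 := by
        refine Finset.sum_congr rfl fun i _ => ?_
        simp only [hmem i l]
      rw [this, Finset.sum_ite_mem, Finset.univ_inter, Finset.sum_const, hcard l,
        nsmul_eq_mul]
      push_cast
      ring
    rw [Finset.sum_congr rfl fun l _ => h2 l, ← Finset.mul_sum]
  -- per-vertex decomposition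
  have hk1 : ((k : ℝ) + 1) ≠ 0 := by positivity
  have hper : ∀ i, ∑ l ∈ S i, (β l - A i) ^ 2
      = (∑ l ∈ S i, (β l) ^ 2) - ((k:ℝ)+1) * (A i) ^ 2 := by
    intro i
    have hs : ∑ l ∈ S i, β l = ((k:ℝ)+1) * A i := by
      rw [hA i]; field_simp
    have : ∑ l ∈ S i, (β l - A i) ^ 2
        = ∑ l ∈ S i, ((β l)^2 - 2 * A i * β l + (A i)^2) := by
      refine Finset.sum_congr rfl fun l _ => by ring
    rw [this, Finset.sum_add_distrib, Finset.sum_sub_distrib, ← Finset.mul_sum, hs,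
      Finset.sum_const, hcard i, nsmul_eq_mul]
    push_cast
    ring
  rw [Finset.sum_congr rfl fun i _ => hper i, Finset.sum_sub_distrib, hdc (fun l => (β l)^2),
    ← Finset.mul_sum]
  have hsumA : ∑ i, A i = ∑ i, β i := by
    have : ∀ i, A i = (∑ l ∈ S i, β l) / ((k:ℝ)+1) := hA
    rw [Finset.sum_congr rfl fun i _ => hA i, ← Finset.sum_div, hdc (fun l => β l)]
    field_simp
  have e1 : ∀ x : ℝ, (x - m)^2 = x^2 - 2*m*x + m^2 := by intro x; ring
  rw [Finset.sum_congr rfl fun i _ => e1 (β i), Finset.sum_congr rfl fun i _ => e1 (A i)]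
  rw [Finset.sum_add_distrib, Finset.sum_sub_distrib, Finset.sum_add_distrib,
    Finset.sum_sub_distrib, ← Finset.mul_sum, ← Finset.mul_sum, hsumA]
  field_simp
  ring
end
end
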